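/- Fix real constants p > 2, β > 0, Λ > 0 and T > 0, and let (x₀, y₀) ∈ ℝ × [0,∞) with F₁(x₀,y₀) > 0. Let A_L : [0,T] → ℝ² solve A_L' = Φ_L(A_L), A_L(0) = (x₀,y₀). If t₀ ∈ (0,T] satisfies F₁(A_L(t)) > 0 for all t < t₀ and F₁(A_L(t₀)) ≤ 0, then A_{L,1}(t₀) ≥ u_c. Moreover, if βΛ < p - 1 and A_U : [0,T] → ℝ² solves A_U' = Φ_U(A_U), A_U(0) = (x₀,y₀), and t₁ ∈ (0,T] satisfies F₁(A_U(t)) > 0 for all t < t₁ and F₁(A_U(t₁)) ≤ 0, then A_{U,1}(t₁) ≥ ū_c, where ū_c = β(1 - βΛ/(p-1))⁻¹. -/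

import Mathlib

open Set

/-- `F₁(u,v) = -p·u + β·v`. -/
noncomputable def F1 (p β : ℝ) (z : ℝ × ℝ) : ℝ := -p * z.1 + β * z.2

/-- `F₂ᴸ(u,v) = 2p(p-1) - 2(p-1)v + 2pu(pu - βv) - 2βΛv`. -/
noncomputable def F2L (p β Λ : ℝ) (z : ℝ × ℝ) : ℝ :=
  2 * p * (p - 1) - 2 * (p - 1) * z.2 + 2 * p * z.1 * (p * z.1 - β * z.2) - 2 * β * Λ * z.2

/-- `F₂ᵁ(u,v) = 2p(p-1) - 2(p-1)v + 2pu(pu - βv) + 2βΛv`. -/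
noncomputable def F2U (p β Λ : ℝ) (z : ℝ × ℝ) : ℝ :=
  2 * p * (p - 1) - 2 * (p - 1) * z.2 + 2 * p * z.1 * (p * z.1 - β * z.2) + 2 * β * Λ * z.2

/-- The lower bounding vector field `Φ_L = (F₁, F₂ᴸ)`. -/
noncomputable def PhiL (p β Λ : ℝ) (z : ℝ × ℝ) : ℝ × ℝ := (F1 p β z, F2L p β Λ z)

/-- The upper bounding vector field `Φ_U = (F₁, F₂ᵁ)`. -/
noncomputable def PhiU (p β Λ : ℝ) (z : ℝ × ℝ) : ℝ × ℝ := (F1 p β z, F2U p β Λ z)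

/-- **Condition I**: `U : [0,T] → ℝ²` is `C¹` with derivative `U'` satisfying
`U₁' = F₁(U)` and `F₂ᴸ(U) ≤ U₂' ≤ F₂ᵁ(U)` on `[0,T]`. -/
def CondI (p β Λ T : ℝ) (U U' : ℝ → ℝ × ℝ) : Prop :=
  (∀ t ∈ Icc (0 : ℝ) T, HasDerivWithinAt U (U' t) (Icc (0 : ℝ) T) t) ∧
  ContinuousOn U' (Icc (0 : ℝ) T) ∧
  (∀ t ∈ Icc (0 : ℝ) T, (U' t).1 = F1 p β (U t)) ∧
  (∀ t ∈ Icc (0 : ℝ) T, F2L p β Λ (U t) ≤ (U' t).2 ∧ (U' t).2 ≤ F2U p β Λ (U t))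

/-- `u_c = β(1 + βΛ/(p-1))⁻¹`. -/
noncomputable def uCrit (p β Λ : ℝ) : ℝ := β * (1 + β * Λ / (p - 1))⁻¹

/-- `ū_c = β(1 - βΛ/(p-1))⁻¹`. -/
noncomputable def uBarCrit (p β Λ : ℝ) : ℝ := β * (1 - β * Λ / (p - 1))⁻¹

/-!
At the first time `t₀` at which the flow leaves `{F₁ > 0}`, the function `t ↦ F₁(A(t))` vanishes
and, being positive just before, has non-positive derivative `-p F₁ + β F₂ = β F₂`. Hence
`F₂(A(t₀)) ≤ 0`. On the line `{F₁ = 0}` (i.e. `pu = βv`) the quadratic term of `F₂` drops out,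
leaving `2p(p-1) - 2(p-1 ± βΛ)v ≤ 0`, so `v ≥ p(p-1)/(p-1 ± βΛ)` and `u = βv/p` is at least the
critical value.
-/

open Filter Topology

theorem hasDerivWithinAt_F1_comp {p β t : ℝ} {s : Set ℝ} {A : ℝ → ℝ × ℝ} {A' : ℝ × ℝ}
    (hA : HasDerivWithinAt A A' s t) :
    HasDerivWithinAt (fun t ↦ F1 p β (A t)) (F1 p β A') s t := by
  have h1 : HasDerivWithinAt (fun t ↦ (A t).1) A'.1 s t := by
    simpa using hA.hasFDerivWithinAt.fst.hasDerivWithinAt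
  have h2 : HasDerivWithinAt (fun t ↦ (A t).2) A'.2 s t := by
    simpa using hA.hasFDerivWithinAt.snd.hasDerivWithinAt
  exact (h1.const_mul (-p)).add (h2.const_mul β)

theorem nonneg_of_continuousWithinAt_Ico {g : ℝ → ℝ} {a b : ℝ} (hab : a < b)
    (hg : ContinuousWithinAt g (Ico a b) b) (hnonneg : ∀ t ∈ Ico a b, 0 ≤ g t) : 0 ≤ g b := by
  have : (𝓝[Ico a b] b).NeBot := by
    rw [← mem_closure_iff_nhdsWithin_neBot, closure_Ico hab.ne]
    exact right_mem_Icc.2 hab.le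
  exact ge_of_tendsto hg (eventually_mem_nhdsWithin.mono hnonneg)

theorem IsLocalMinOn.hasDerivWithinAt_Icc_right_nonpos {g : ℝ → ℝ} {g' a b : ℝ} (hab : a < b)
    (hmin : IsLocalMinOn g (Icc a b) b) (hg : HasDerivWithinAt g g' (Icc a b) b) : g' ≤ 0 := by
  have hdir : a - b ∈ posTangentConeAt (Icc a b) b :=
    sub_mem_posTangentConeAt_of_segment_subset <| by
      rw [segment_symm]; exact segment_subset_Icc hab.le
  have := hmin.hasFDerivWithinAt_nonneg hg.hasFDerivWithinAt hdir
  rw [ContinuousLinearMap.toSpanSingleton_apply, smul_eq_mul] at this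
  exact nonpos_of_mul_nonneg_right this (sub_neg.2 hab)

theorem eq_zero_and_hasDerivWithinAt_nonpos_of_first_exit {g : ℝ → ℝ} {g' a b : ℝ} (hab : a < b)
    (hg : HasDerivWithinAt g g' (Icc a b) b) (hpos : ∀ t ∈ Ico a b, 0 < g t) (hle : g b ≤ 0) :
    g b = 0 ∧ g' ≤ 0 := by
  have hgb : g b = 0 := le_antisymm hle <| nonneg_of_continuousWithinAt_Ico hab
    (hg.continuousWithinAt.mono Ico_subset_Icc_self) fun t ht ↦ (hpos t ht).le
  refine ⟨hgb, IsLocalMinOn.hasDerivWithinAt_Icc_right_nonpos hab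
    (IsMinOn.localize (isMinOn_iff.2 fun t ht ↦ ?_)) hg⟩
  rcases ht.2.eq_or_lt with rfl | htb
  · exact le_rfl
  · exact hgb ▸ (hpos t ⟨ht.1, htb⟩).le

theorem F1_eq_zero_and_nonpos_of_first_exit {p β a b w : ℝ} {A : ℝ → ℝ × ℝ} (hβ : 0 < β)
    (hab : a < b) (hA : HasDerivWithinAt A (F1 p β (A b), w) (Icc a b) b)
    (hpos : ∀ t ∈ Ico a b, 0 < F1 p β (A t)) (hle : F1 p β (A b) ≤ 0) :
    F1 p β (A b) = 0 ∧ w ≤ 0 := by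
  obtain ⟨h0, hd⟩ := eq_zero_and_hasDerivWithinAt_nonpos_of_first_exit hab
    (hasDerivWithinAt_F1_comp hA) hpos hle
  have hd' : -p * F1 p β (A b) + β * w ≤ 0 := hd
  rw [h0, mul_zero, zero_add] at hd'
  exact ⟨h0, nonpos_of_mul_nonpos_right hd' hβ⟩

theorem F2L_eq_of_F1_eq_zero {p β Λ : ℝ} {z : ℝ × ℝ} (hz : F1 p β z = 0) :
    F2L p β Λ z = 2 * p * (p - 1) - 2 * (p - 1 + β * Λ) * z.2 := by
  unfold F1 at hz; unfold F2L; linear_combination (-2 * p * z.1) * hz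

theorem F2U_eq_of_F1_eq_zero {p β Λ : ℝ} {z : ℝ × ℝ} (hz : F1 p β z = 0) :
    F2U p β Λ z = 2 * p * (p - 1) - 2 * (p - 1 - β * Λ) * z.2 := by
  unfold F1 at hz; unfold F2U; linear_combination (-2 * p * z.1) * hz

theorem div_le_fst_of_F1_eq_zero {p β c : ℝ} {z : ℝ × ℝ} (hp : 0 < p) (hβ : 0 ≤ β) (hc : 0 < c)
    (hz₁ : F1 p β z = 0) (hz₂ : 2 * p * (p - 1) - 2 * c * z.2 ≤ 0) :
    β * (p - 1) / c ≤ z.1 := by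
  unfold F1 at hz₁
  rw [div_le_iff₀ hc]
  have : p * (β * (p - 1)) ≤ p * (z.1 * c) := by nlinarith
  exact le_of_mul_le_mul_left this hp

theorem uCrit_eq {p β Λ : ℝ} (hp : p - 1 ≠ 0) : uCrit p β Λ = β * (p - 1) / (p - 1 + β * Λ) := by
  rw [uCrit, one_add_div hp, inv_div, mul_div_assoc]

theorem uBarCrit_eq {p β Λ : ℝ} (hp : p - 1 ≠ 0) :
    uBarCrit p β Λ = β * (p - 1) / (p - 1 - β * Λ) := by
  rw [uBarCrit, one_sub_div hp, inv_div, mul_div_assoc]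

theorem flows_exit_to_the_right
    (p β Λ T : ℝ) (hp : 2 < p) (hβ : 0 < β) (hΛ : 0 < Λ)
    (x₀ y₀ : ℝ) :
    (∀ AL : ℝ → ℝ × ℝ,
      (∀ t ∈ Icc (0 : ℝ) T, HasDerivWithinAt AL (PhiL p β Λ (AL t)) (Icc (0 : ℝ) T) t) →
      AL 0 = (x₀, y₀) →
      ∀ t₀ ∈ Ioc (0 : ℝ) T, (∀ t ∈ Ico (0 : ℝ) t₀, 0 < F1 p β (AL t)) →
        F1 p β (AL t₀) ≤ 0 → uCrit p β Λ ≤ (AL t₀).1) ∧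
    (β * Λ < p - 1 →
      ∀ AU : ℝ → ℝ × ℝ,
      (∀ t ∈ Icc (0 : ℝ) T, HasDerivWithinAt AU (PhiU p β Λ (AU t)) (Icc (0 : ℝ) T) t) →
      AU 0 = (x₀, y₀) →
      ∀ t₁ ∈ Ioc (0 : ℝ) T, (∀ t ∈ Ico (0 : ℝ) t₁, 0 < F1 p β (AU t)) →
        F1 p β (AU t₁) ≤ 0 → uBarCrit p β Λ ≤ (AU t₁).1) := by
  have hp₁ : 0 < p - 1 := by linarith
  refine ⟨fun AL hAL _ t₀ ht₀ hpos hle ↦ ?_, fun hβΛ AU hAU _ t₁ ht₁ hpos hle ↦ ?_⟩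
  · obtain ⟨hF1, hF2⟩ := F1_eq_zero_and_nonpos_of_first_exit hβ ht₀.1
      ((hAL t₀ ⟨ht₀.1.le, ht₀.2⟩).mono (Icc_subset_Icc_right ht₀.2)) hpos hle
    rw [uCrit_eq hp₁.ne']
    exact div_le_fst_of_F1_eq_zero (by linarith) hβ.le (add_pos hp₁ (mul_pos hβ hΛ))
      hF1 (F2L_eq_of_F1_eq_zero hF1 ▸ hF2)
  · obtain ⟨hF1, hF2⟩ := F1_eq_zero_and_nonpos_of_first_exit hβ ht₁.1
      ((hAU t₁ ⟨ht₁.1.le, ht₁.2⟩).mono (Icc_subset_Icc_right ht₁.2)) hpos hle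
    rw [uBarCrit_eq hp₁.ne']
    exact div_le_fst_of_F1_eq_zero (by linarith) hβ.le (sub_pos.2 hβΛ)
      hF1 (F2U_eq_of_F1_eq_zero hF1 ▸ hF2)
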